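/- Let G be a finite group, F a group, (F, G, ◁, ▷) a matched pair, σ, τ cocycle data, and let (k^G τ#_σ kF, R) be a coquasitriangular Hopf algebra. If g, h ∈ G and f ∈ F with g ∉ G_f (i.e. g ▷ f ≠ f), then R(p_g # (g⁻¹ ▷ f), p_h # 1) = R(p_g # f, p_h # 1) = 0 and R(p_h # 1, p_g # f) = R(p_h # 1, p_g # (g⁻¹ ▷ f)) = 0. -/

import Mathlib

/-- A matched pair of groups `(F, G, ◁, ▷)`: `rtr g f = g ▷ f` is an action of the
group `G` on the set `F`, and `ltl g f = g ◁ f` is an action of the group `F` on the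
set `G`, satisfying the matched pair compatibility conditions. -/
structure MatchedPair (F G : Type*) [Group F] [Group G] where
  rtr : G → F → F
  ltl : G → F → G
  one_rtr : ∀ f, rtr 1 f = f
  mul_rtr : ∀ g g' f, rtr (g * g') f = rtr g (rtr g' f)
  ltl_one : ∀ g, ltl g 1 = g
  ltl_mul : ∀ g f f', ltl g (f * f') = ltl (ltl g f) f'
  rtr_mul : ∀ g f f', rtr g (f * f') = rtr g f * rtr (ltl g f) f'
  mul_ltl : ∀ g g' f, ltl (g * g') f = ltl g (rtr g' f) * ltl g' f

/-- Cocycle data `(σ, τ)` for the abelian extension `k^G τ#_σ kF`. -/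
structure CocycleData (k F G : Type*) [Field k] [Group F] [Group G]
    (mp : MatchedPair F G) where
  sig : G → F → F → kˣ
  tau : G → G → F → kˣ
  sig_one_left : ∀ g f, sig g 1 f = 1
  sig_one_right : ∀ g f, sig g f 1 = 1
  one_sig : ∀ f f', sig 1 f f' = 1
  sig_cocycle : ∀ g f f' f'',
    sig (mp.ltl g f) f' f'' * sig g f (f' * f'') = sig g f f' * sig g (f * f') f''
  one_tau : ∀ g f, tau 1 g f = 1
  tau_one : ∀ g f, tau g 1 f = 1
  tau_one_right : ∀ g g', tau g g' 1 = 1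
  tau_cocycle : ∀ g g' g'' f,
    tau g g' (mp.rtr g'' f) * tau (g * g') g'' f = tau g (g' * g'') f * tau g' g'' f
  compat : ∀ g g' f f',
    sig (g * g') f f' * tau g g' (f * f')
      = sig g (mp.rtr g' f) (mp.rtr (mp.ltl g' f) f') * sig g' f f' * tau g g' f
        * tau (mp.ltl g (mp.rtr g' f)) (mp.ltl g' f) f'

/-- The product `(p_g # f)(p_{g'} # f') = δ_{g ◁ f, g'} σ(g; f, f') p_g # (f f')` of two
basis elements of `H = k^G τ#_σ kF`, as an element of `H` (realized as `(G × F) →₀ k`). -/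
noncomputable def mulB {k F G : Type*} [Field k] [Group F] [Group G] [DecidableEq G]
    (mp : MatchedPair F G) (cd : CocycleData k F G mp) (i j : G × F) : (G × F) →₀ k :=
  if mp.ltl i.1 i.2 = j.1 then
    Finsupp.single (i.1, i.2 * j.2) ((cd.sig i.1 i.2 j.2 : kˣ) : k)
  else 0

/-- `R` (given by its values `R g f h f' = R(p_g # f, p_h # f')` on the basis
`{p_g # f}` of `H = k^G τ#_σ kF`) is a coquasitriangular structure on `H`:
it is convolution invertible, satisfies `R(a, bc) = Σ R(a₁, c) R(a₂, b)` and
`R(ab, c) = Σ R(a, c₁) R(b, c₂)`, and the quasi-commutativity axiom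
`Σ R(a₁, b₁) a₂ b₂ = Σ b₁ a₁ R(a₂, b₂)`, all expressed on basis elements using
`Δ(p_g # f) = Σ_x τ(g x⁻¹, x; f) (p_{g x⁻¹} # (x ▷ f)) ⊗ (p_x # f)` and
`ε(p_g # f) = δ_{g,1}`. -/
structure IsCQT {k F G : Type*} [Field k] [Group F] [Group G] [Fintype G] [DecidableEq G]
    (mp : MatchedPair F G) (cd : CocycleData k F G mp)
    (R : G → F → G → F → k) : Prop where
  conv_inv : ∃ R' : G → F → G → F → k,
    (∀ (g h : G) (f f' : F),
      ∑ x : G, ∑ y : G,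
        ((cd.tau (g * x⁻¹) x f : kˣ) : k) * ((cd.tau (h * y⁻¹) y f' : kˣ) : k) *
          R (g * x⁻¹) (mp.rtr x f) (h * y⁻¹) (mp.rtr y f') * R' x f y f'
        = (if g = 1 then (1 : k) else 0) * (if h = 1 then (1 : k) else 0)) ∧
    (∀ (g h : G) (f f' : F),
      ∑ x : G, ∑ y : G,
        ((cd.tau (g * x⁻¹) x f : kˣ) : k) * ((cd.tau (h * y⁻¹) y f' : kˣ) : k) *
          R' (g * x⁻¹) (mp.rtr x f) (h * y⁻¹) (mp.rtr y f') * R x f y f'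
        = (if g = 1 then (1 : k) else 0) * (if h = 1 then (1 : k) else 0))
  cqt1 : ∀ (g h l : G) (f f' f'' : F),
    (if mp.ltl h f' = l then (1 : k) else 0) * ((cd.sig h f' f'' : kˣ) : k)
        * R g f h (f' * f'')
      = ∑ x : G, ((cd.tau (g * x⁻¹) x f : kˣ) : k)
          * R (g * x⁻¹) (mp.rtr x f) l f'' * R x f h f'
  cqt2 : ∀ (g h l : G) (f f' f'' : F),
    (if mp.ltl g f = h then (1 : k) else 0) * ((cd.sig g f f' : kˣ) : k)
        * R g (f * f') l f''
      = ∑ x : G, ((cd.tau (l * x⁻¹) x f'' : kˣ) : k)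
          * R g f (l * x⁻¹) (mp.rtr x f'') * R h f' x f''
  qcomm : ∀ (g h : G) (f f' : F),
    (∑ x : G, ∑ y : G,
      (((cd.tau (g * x⁻¹) x f : kˣ) : k) * ((cd.tau (h * y⁻¹) y f' : kˣ) : k) *
        R (g * x⁻¹) (mp.rtr x f) (h * y⁻¹) (mp.rtr y f')) • mulB mp cd (x, f) (y, f'))
      = ∑ x : G, ∑ y : G,
        (((cd.tau (g * x⁻¹) x f : kˣ) : k) * ((cd.tau (h * y⁻¹) y f' : kˣ) : k) *
          R x f y f') • mulB mp cd (h * y⁻¹, mp.rtr y f') (g * x⁻¹, mp.rtr x f)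

/-!
Compare the coefficients of `p_1 # f` on the two sides of the quasi-commutativity axiom,
for `a = p_g # f, b = p_h # 1` and for `a = p_h # 1, b = p_g # f`. On the left only the
summand `x = y = 1` contributes, and it contributes `R(a, b)`. On the right a nonzero
contribution forces `x = g` (resp. `y = g`) and then `g ▷ f = f`. The claims about
`g⁻¹ ▷ f` follow because `g` does not fix `g⁻¹ ▷ f` either.
-/

namespace MatchedPair

variable {F G : Type*} [Group F] [Group G] (mp : MatchedPair F G)

lemma rtr_one (g : G) : mp.rtr g 1 = 1 := by
  simpa [mp.ltl_one] using mp.rtr_mul g 1 1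

lemma one_ltl (f : F) : mp.ltl 1 f = 1 := by
  simpa [mp.one_rtr] using mp.mul_ltl 1 1 f

lemma rtr_rtr_inv (g : G) (f : F) : mp.rtr g (mp.rtr g⁻¹ f) = f := by
  rw [← mp.mul_rtr, mul_inv_cancel, mp.one_rtr]

lemma rtr_inv_rtr_ne {g : G} {f : F} (hg : mp.rtr g f ≠ f) :
    mp.rtr g (mp.rtr g⁻¹ f) ≠ mp.rtr g⁻¹ f := by
  rw [mp.rtr_rtr_inv]
  intro hf
  apply hg
  calc mp.rtr g f = mp.rtr g (mp.rtr g⁻¹ f) := by rw [← hf]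
    _ = f := mp.rtr_rtr_inv g f

end MatchedPair

section mulB

variable {k F G : Type*} [Field k] [Group F] [Group G] [DecidableEq G]
  (mp : MatchedPair F G) (cd : CocycleData k F G mp)

lemma mulB_apply_self {i j : G × F} (h : mp.ltl i.1 i.2 = j.1) :
    mulB mp cd i j (i.1, i.2 * j.2) = cd.sig i.1 i.2 j.2 := by
  simp [mulB, h]

lemma mulB_apply_eq_zero {i j p : G × F} (h : mp.ltl i.1 i.2 = j.1 → (i.1, i.2 * j.2) ≠ p) :
    mulB mp cd i j p = 0 := by
  unfold mulB
  split_ifs with hij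
  · exact Finsupp.single_eq_of_ne (h hij).symm
  · rfl

lemma mulB_apply_one_eq_zero {i j : G × F} {f : F} (h : i.1 = 1 → j.1 = 1 → i.2 * j.2 ≠ f) :
    mulB mp cd i j (1, f) = 0 := by
  refine mulB_apply_eq_zero mp cd fun hij hp => ?_
  obtain ⟨hi, hf⟩ := Prod.mk.inj hp
  exact h hi (hij.symm.trans (hi ▸ mp.one_ltl i.2)) hf

variable [Fintype G]

lemma sum_smul_mulB_one_right_apply (c : G → G → k) (f : F) :
    (∑ x, ∑ y, c x y • mulB mp cd (x, f) (y, 1)) (1, f) = c 1 1 := by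
  simp only [Finsupp.finsetSum_apply, Finsupp.smul_apply, smul_eq_mul]
  rw [Fintype.sum_eq_single 1, Fintype.sum_eq_single 1]
  · simpa [cd.sig_one_right] using
      congrArg (c 1 1 * ·) (mulB_apply_self mp cd (i := (1, f)) (j := (1, 1)) (mp.one_ltl f))
  · exact fun y hy => mul_eq_zero_of_right _ <|
      mulB_apply_one_eq_zero mp cd fun _ hy' => absurd hy' hy
  · exact fun x hx => Finset.sum_eq_zero fun y _ => mul_eq_zero_of_right _ <|
      mulB_apply_one_eq_zero mp cd fun hx' => absurd hx' hx

lemma sum_smul_mulB_one_left_apply (c : G → G → k) (f : F) :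
    (∑ x, ∑ y, c x y • mulB mp cd (x, 1) (y, f)) (1, f) = c 1 1 := by
  simp only [Finsupp.finsetSum_apply, Finsupp.smul_apply, smul_eq_mul]
  rw [Fintype.sum_eq_single 1, Fintype.sum_eq_single 1]
  · simpa [cd.sig_one_left] using
      congrArg (c 1 1 * ·) (mulB_apply_self mp cd (i := (1, 1)) (j := (1, f)) (mp.ltl_one 1))
  · exact fun y hy => mul_eq_zero_of_right _ <|
      mulB_apply_one_eq_zero mp cd fun _ hy' => absurd hy' hy
  · exact fun x hx => Finset.sum_eq_zero fun y _ => mul_eq_zero_of_right _ <|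
      mulB_apply_one_eq_zero mp cd fun hx' => absurd hx' hx

lemma sum_smul_mulB_apply_one_eq_zero (c : G → G → k) (i j : G → G → G × F) {f : F}
    (h : ∀ x y, (i x y).1 = 1 → (j x y).1 = 1 → (i x y).2 * (j x y).2 ≠ f) :
    (∑ x, ∑ y, c x y • mulB mp cd (i x y) (j x y)) (1, f) = 0 := by
  simp only [Finsupp.finsetSum_apply, Finsupp.smul_apply, smul_eq_mul]
  exact Finset.sum_eq_zero fun x _ => Finset.sum_eq_zero fun y _ =>
    mul_eq_zero_of_right _ (mulB_apply_one_eq_zero mp cd (h x y))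

end mulB

namespace IsCQT

variable {k F G : Type*} [Field k] [Group F] [Group G] [Fintype G] [DecidableEq G]
  {mp : MatchedPair F G} {cd : CocycleData k F G mp} {R : G → F → G → F → k}

lemma apply_one_right_eq_zero (hR : IsCQT mp cd R) (h : G) {g : G} {f : F}
    (hg : mp.rtr g f ≠ f) : R g f h 1 = 0 := by
  have hq := DFunLike.congr_fun (hR.qcomm g h f 1) (1, f)
  rw [sum_smul_mulB_one_right_apply,
    sum_smul_mulB_apply_one_eq_zero mp cd _ _ _ fun _ _ _ hx => ?_] at hq
  · simpa [cd.tau_one, mp.one_rtr, mp.rtr_one] using hq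
  obtain rfl := (mul_inv_eq_one.mp hx).symm
  simpa [mp.rtr_one] using hg

lemma apply_one_left_eq_zero (hR : IsCQT mp cd R) (h : G) {g : G} {f : F}
    (hg : mp.rtr g f ≠ f) : R h 1 g f = 0 := by
  have hq := DFunLike.congr_fun (hR.qcomm h g 1 f) (1, f)
  rw [sum_smul_mulB_one_left_apply,
    sum_smul_mulB_apply_one_eq_zero mp cd _ _ _ fun _ _ hy _ => ?_] at hq
  · simpa [cd.tau_one, mp.one_rtr, mp.rtr_one] using hq
  obtain rfl := (mul_inv_eq_one.mp hy).symm
  simpa [mp.rtr_one] using hg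

end IsCQT

theorem R_eq_zero_of_not_mem_stabilizer_general {k F G : Type*} [Field k]
    [Group F] [Group G] [Fintype G] [DecidableEq G]
    (mp : MatchedPair F G) (cd : CocycleData k F G mp)
    (R : G → F → G → F → k) (hR : IsCQT mp cd R)
    (g h : G) (f : F) (hg : mp.rtr g f ≠ f) :
    R g (mp.rtr g⁻¹ f) h 1 = 0 ∧ R g f h 1 = 0 ∧
      R h 1 g f = 0 ∧ R h 1 g (mp.rtr g⁻¹ f) = 0 :=
  have hg' := mp.rtr_inv_rtr_ne hg
  ⟨hR.apply_one_right_eq_zero h hg', hR.apply_one_right_eq_zero h hg,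
    hR.apply_one_left_eq_zero h hg, hR.apply_one_left_eq_zero h hg'⟩

/-- Let `(k^G τ#_σ kF, R)` be coquasitriangular and `g ∉ G_f` (i.e. `g ▷ f ≠ f`). Then
`R(p_g # (g⁻¹ ▷ f), p_h # 1) = R(p_g # f, p_h # 1) = 0` and
`R(p_h # 1, p_g # f) = R(p_h # 1, p_g # (g⁻¹ ▷ f)) = 0`. -/
theorem R_eq_zero_of_not_mem_stabilizer {k F G : Type*} [Field k] [IsAlgClosed k]
    [CharZero k] [Group F] [Group G] [Fintype G] [DecidableEq G]
    (mp : MatchedPair F G) (cd : CocycleData k F G mp)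
    (R : G → F → G → F → k) (hR : IsCQT mp cd R)
    (g h : G) (f : F) (hg : mp.rtr g f ≠ f) :
    R g (mp.rtr g⁻¹ f) h 1 = 0 ∧ R g f h 1 = 0 ∧
      R h 1 g f = 0 ∧ R h 1 g (mp.rtr g⁻¹ f) = 0 :=
  R_eq_zero_of_not_mem_stabilizer_general mp cd R hR g h f hg
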